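/- Let (f_n) be a sequence of convex functions on [0,1] that converges pointwise to a continuous convex function f on [0,1]. Then f_n converges to f uniformly on [0,1]. -/
import Mathlib

open Filter Set

private lemma conv_lower_right {s : Set ℝ} {h : ℝ → ℝ} (hc : ConvexOn ℝ s h)
    {x b c : ℝ} (hx : x ∈ s) (hb : b ∈ s) (hcs : c ∈ s)
    (hxb : x ≤ b) (hbc : b < c) (hd : b - x ≤ c - b) :
    h b - |h c - h b| ≤ h x := by
  rcases eq_or_lt_of_le hxb with rfl | hxb
  · have := abs_nonneg (h c - h x); linarith
  · have hs := hc.slope_mono_adjacent hx hcs hxb hbc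
    rw [div_le_div_iff₀ (by linarith) (by linarith)] at hs
    nlinarith [le_abs_self (h c - h b), abs_nonneg (h c - h b), sub_pos.2 hxb, sub_pos.2 hbc]

private lemma conv_lower_left {s : Set ℝ} {h : ℝ → ℝ} (hc : ConvexOn ℝ s h)
    {a b x : ℝ} (ha : a ∈ s) (hb : b ∈ s) (hx : x ∈ s)
    (hab : a < b) (hbx : b ≤ x) (hd : x - b ≤ b - a) :
    h b - |h b - h a| ≤ h x := by
  rcases eq_or_lt_of_le hbx with rfl | hbx
  · have := abs_nonneg (h b - h a); linarith
  · have hs := hc.slope_mono_adjacent ha hx hab hbx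
    rw [div_le_div_iff₀ (by linarith) (by linarith)] at hs
    nlinarith [neg_abs_le (h b - h a), abs_nonneg (h b - h a), sub_pos.2 hab, sub_pos.2 hbx]

set_option maxHeartbeats 800000 in
theorem convex_pointwise_to_uniform
    (f : ℕ → ℝ → ℝ) (g : ℝ → ℝ)
    (hconv : ∀ n, ConvexOn ℝ (Set.Icc (0:ℝ) 1) (f n))
    (hgconv : ConvexOn ℝ (Set.Icc (0:ℝ) 1) g)
    (hgcont : ContinuousOn g (Set.Icc (0:ℝ) 1))
    (hpt : ∀ x ∈ Set.Icc (0:ℝ) 1,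
      Filter.Tendsto (fun n => f n x) Filter.atTop (nhds (g x))) :
    TendstoUniformlyOn f g Filter.atTop (Set.Icc (0:ℝ) 1) := by
  rw [Metric.tendstoUniformlyOn_iff]
  intro ε hε
  have hε6 : 0 < ε / 6 := by linarith
  have hunif := isCompact_Icc.uniformContinuousOn_of_continuous hgcont
  rw [Metric.uniformContinuousOn_iff] at hunif
  obtain ⟨δ, hδ, hgδ⟩ := hunif (ε / 6) hε6
  obtain ⟨M, hM2, hMδ⟩ : ∃ M : ℕ, 2 ≤ M ∧ 2 / δ < M := by
    obtain ⟨m₀, hm₀⟩ := exists_nat_gt (2 / δ)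
    exact ⟨m₀ + 2, by omega, by push_cast; linarith⟩
  have hMpos : (0:ℝ) < M := by
    have : (2:ℝ) ≤ M := by exact_mod_cast hM2
    linarith
  have h2M : 2 / (M:ℝ) < δ := by
    rw [div_lt_iff₀ hMpos]
    rw [div_lt_iff₀ hδ] at hMδ
    nlinarith
  have hmem : ∀ j : ℕ, j ≤ M → (j:ℝ)/M ∈ Icc (0:ℝ) 1 := by
    intro j hj
    refine ⟨by positivity, ?_⟩
    rw [div_le_one hMpos]; exact_mod_cast hj
  have hev : ∀ᶠ n in atTop, ∀ j ∈ Finset.range (M+1), |f n ((j:ℝ)/M) - g ((j:ℝ)/M)| < ε/6 := by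
    rw [eventually_all_finset]
    intro j hj
    have hjm := hmem j (by simpa [Nat.lt_succ_iff] using hj)
    have := Metric.tendsto_nhds.mp (hpt _ hjm) (ε/6) hε6
    simpa [Real.dist_eq] using this
  filter_upwards [hev] with n hn x hx
  obtain ⟨hx0, hx1⟩ := hx
  set i : ℕ := min ⌊x * M⌋₊ (M - 1) with hi
  have hiM : i + 1 ≤ M := by omega
  have hi1 : (i:ℝ) ≤ x * M := by
    have h1 : i ≤ ⌊x * M⌋₊ := min_le_left _ _
    have h2 : (⌊x * M⌋₊ : ℝ) ≤ x * M := Nat.floor_le (by positivity)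
    have h3 : (i:ℝ) ≤ (⌊x * M⌋₊ : ℝ) := by exact_mod_cast h1
    linarith
  have hi2 : x * M ≤ (i:ℝ) + 1 := by
    rcases le_or_gt ⌊x * M⌋₊ (M - 1) with hc | hc
    · have hie : i = ⌊x * M⌋₊ := min_eq_left hc
      rw [hie]
      exact (Nat.lt_floor_add_one (x * M)).le
    · have hie : i = M - 1 := min_eq_right hc.le
      have hi' : (i:ℝ) + 1 = M := by
        rw [hie]
        have h1 : (1:ℕ) ≤ M := by omega
        push_cast [h1]
        ring
      rw [hi']
      nlinarith
  have ha' : (i:ℝ)/M ≤ x := by rw [div_le_iff₀ hMpos]; linarith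
  have hb' : x ≤ (i:ℝ)/M + 1/M := by
    rw [← le_div_iff₀ hMpos] at hi2
    have he : ((i:ℝ) + 1)/M = (i:ℝ)/M + 1/M := by ring
    linarith
  have e12 : (2:ℝ)/M = 1/M + 1/M := by ring
  have h1M : (0:ℝ) < 1/M := by positivity
  -- closeness of grid points to x
  have hgx : ∀ j : ℕ, j ≤ M → |(j:ℝ) - x*M| ≤ 2 → |g ((j:ℝ)/M) - g x| < ε/6 := by
    intro j hj hjx
    have hd1 : |(j:ℝ)/M - x| ≤ 2/M := by
      have he : (j:ℝ)/M - x = ((j:ℝ) - x*M)/M := by field_simp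
      rw [he, abs_div, abs_of_pos hMpos]
      gcongr
    have := hgδ _ (hmem j hj) x ⟨hx0, hx1⟩ (by rw [Real.dist_eq]; linarith)
    simpa [Real.dist_eq] using this
  -- closeness of adjacent grid points
  have hgg : ∀ j k : ℕ, j ≤ M → k ≤ M → |(j:ℝ) - (k:ℝ)| ≤ 2 →
      |g ((j:ℝ)/M) - g ((k:ℝ)/M)| < ε/6 := by
    intro j k hj hk hjk
    have hd1 : |(j:ℝ)/M - (k:ℝ)/M| ≤ 2/M := by
      have he : (j:ℝ)/M - (k:ℝ)/M = ((j:ℝ) - (k:ℝ))/M := by ring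
      rw [he, abs_div, abs_of_pos hMpos]
      gcongr
    have := hgδ _ (hmem j hj) _ (hmem k hk) (by rw [Real.dist_eq]; linarith)
    simpa [Real.dist_eq] using this
  -- cast identities
  have ec1 : ((i+1:ℕ):ℝ)/M = (i:ℝ)/M + 1/M := by push_cast; ring
  have ec2 : ((i+2:ℕ):ℝ)/M = (i:ℝ)/M + 2/M := by push_cast; ring
  -- grid estimates for f n
  have hfa := abs_lt.mp (hn i (Finset.mem_range.2 (by omega)))
  have hfb := abs_lt.mp (by have := hn (i+1) (Finset.mem_range.2 (by omega)); rwa [ec1] at this)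
  -- g close to x at i and i+1
  have hga := abs_lt.mp (hgx i (by omega) (by rw [abs_le]; constructor <;> linarith))
  have hgb := abs_lt.mp (by
    have := hgx (i+1) (by omega) (by rw [Nat.cast_add, Nat.cast_one, abs_le]; constructor <;> linarith)
    rwa [ec1] at this)
  -- upper bound
  have hupper : f n x ≤ max (f n ((i:ℝ)/M)) (f n ((i:ℝ)/M + 1/M)) := by
    have hseg : x ∈ segment ℝ ((i:ℝ)/M) ((i:ℝ)/M + 1/M) := by
      rw [segment_eq_Icc (by linarith)]
      exact ⟨ha', hb'⟩
    have := (hconv n).le_on_segment (hmem i (by omega)) (ec1 ▸ hmem (i+1) hiM) hseg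
    exact this
  have hup : f n x < g x + ε := by
    rcases le_total (f n ((i:ℝ)/M)) (f n ((i:ℝ)/M + 1/M)) with hc | hc
    · rw [max_eq_right hc] at hupper; linarith
    · rw [max_eq_left hc] at hupper; linarith
  -- lower bound
  have hlow : g x - ε < f n x := by
    rcases le_or_gt (i+2) M with hcase | hcase
    · -- use points i+1 and i+2 to the right
      have hfc := abs_lt.mp (by
        have := hn (i+2) (Finset.mem_range.2 (by omega)); rwa [ec2] at this)
      have hgbc : |g ((i:ℝ)/M + 2/M) - g ((i:ℝ)/M + 1/M)| < ε/6 := by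
        have := hgg (i+2) (i+1) hcase hiM (by push_cast; rw [abs_le]; constructor <;> linarith)
        rwa [ec1, ec2] at this
      have hfbc : |f n ((i:ℝ)/M + 2/M) - f n ((i:ℝ)/M + 1/M)| < ε/2 := by
        rw [abs_lt]
        have h1 := abs_lt.mp hgbc
        constructor <;> linarith
      have hkey := conv_lower_right (hconv n) (x := x) ⟨hx0, hx1⟩
        (ec1 ▸ hmem (i+1) hiM) (ec2 ▸ hmem (i+2) hcase)
        hb' (by linarith) (by linarith)
      have habs := le_abs_self (f n ((i:ℝ)/M + 2/M) - f n ((i:ℝ)/M + 1/M))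
      have := abs_lt.mp hfbc
      linarith
    · -- i = M - 1 ≥ 1 : use points i-1 and i to the left
      have hi1' : 1 ≤ i := by omega
      have ecm : ((i-1:ℕ):ℝ)/M = (i:ℝ)/M - 1/M := by
        push_cast [hi1']; ring
      have hfm := abs_lt.mp (by
        have := hn (i-1) (Finset.mem_range.2 (by omega)); rwa [ecm] at this)
      have hgm : |g ((i:ℝ)/M) - g ((i:ℝ)/M - 1/M)| < ε/6 := by
        have := hgg i (i-1) (by omega) (by omega)
          (by push_cast [hi1']; rw [abs_le]; constructor <;> linarith)
        rwa [ecm] at this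
      have hfab : |f n ((i:ℝ)/M) - f n ((i:ℝ)/M - 1/M)| < ε/2 := by
        rw [abs_lt]
        have h1 := abs_lt.mp hgm
        constructor <;> linarith
      have hkey := conv_lower_left (hconv n) (x := x)
        (ecm ▸ hmem (i-1) (by omega)) (hmem i (by omega)) ⟨hx0, hx1⟩
        (by linarith) ha' (by linarith)
      have habs := le_abs_self (f n ((i:ℝ)/M) - f n ((i:ℝ)/M - 1/M))
      have := abs_lt.mp hfab
      linarith
  rw [Real.dist_eq, abs_lt]
  constructor <;> linarith
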